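/- For every s ∈ ℂ, the linear map φ̂_s : 𝒟̂ → hgl defined by φ̂_s(t^k f(D)) = φ_s(t^k f(D)) for k ≠ 0, φ̂_s(t^0 f(D)) = φ_s(t^0 f(D)) − β_s(f)·K, and φ̂_s(K) = K, where β_s : ℂ[x] → ℂ is the linear functional with β_s(x^l) = (B_{l+1}(s) − B_{l+1}(0))/(l+1) for l ≥ 0 (B_n the Bernoulli polynomials), is an injective homomorphism of Lie algebras from 𝒟̂ to hgl. -/

import Mathlib

open Polynomial

/-- `glbar`: matrices over `ℂ` indexed by `ℤ × ℤ` with only finitely many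
nonzero diagonals. -/
def HasFinDiags (A : ℤ → ℤ → ℂ) : Prop :=
  ∃ S : Finset ℤ, ∀ i j : ℤ, j - i ∉ S → A i j = 0

/-- The matrix product `(AB)_{ij} = Σ_{k ∈ ℤ} a_{ik} b_{kj}`. -/
noncomputable def matMul (A B : ℤ → ℤ → ℂ) : ℤ → ℤ → ℂ :=
  fun i j => ∑ᶠ k : ℤ, A i k * B k j

/-- The commutator `[X,Y] = XY - YX`. -/
noncomputable def matBr (X Y : ℤ → ℤ → ℂ) : ℤ → ℤ → ℂ :=
  matMul X Y - matMul Y X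

/-- The diagonal matrix `J` with `J_{ii} = 1` for `i ≤ 0` and `J_{ii} = 0`
for `i > 0`. -/
noncomputable def Jmat : ℤ → ℤ → ℂ :=
  fun i j => if i = j ∧ i ≤ 0 then 1 else 0

/-- The trace: sum of the diagonal entries. -/
noncomputable def matTr (X : ℤ → ℤ → ℂ) : ℂ :=
  ∑ᶠ i : ℤ, X i i

/-- The 2-cocycle `C(A,B) = Tr([J,A]B)` of `glbar`. -/
noncomputable def Ccoc (A B : ℤ → ℤ → ℂ) : ℂ :=
  matTr (matMul (matBr Jmat A) B)

/-- The bracket on `hgl = glbar ⊕ ℂ·K`: `[(A,a),(B,b)] = ([A,B], C(A,B))`. -/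
noncomputable def hglBr (P Q : (ℤ → ℤ → ℂ) × ℂ) : (ℤ → ℤ → ℂ) × ℂ :=
  (matBr P.1 Q.1, Ccoc P.1 Q.1)

/-- `𝒟 = ⊕_{k∈ℤ} ℂ[x]`; `tᵏ f(D)` is `Finsupp.single k f`. -/
abbrev Dcal : Type := ℤ →₀ Polynomial ℂ

/-- The bracket on `𝒟`, the bilinear extension of
`[tʳ f(D), tˢ g(D)] = t^{r+s}( f(x+s)g(x) - f(x)g(x+r) )`. -/
noncomputable def Dbr (u v : Dcal) : Dcal :=
  u.sum fun r f => v.sum fun s g =>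
    Finsupp.single (r + s) (f.comp (X + C (s : ℂ)) * g - f * g.comp (X + C (r : ℂ)))

/-- The 2-cocycle `Ψ` on `𝒟`. -/
noncomputable def Psi (u v : Dcal) : ℂ :=
  u.sum fun r f => v.sum fun s g =>
    if r + s = 0 then
      (if 0 ≤ r then
        ∑ j ∈ Finset.range r.toNat, f.eval (-((j : ℂ) + 1)) * g.eval ((r : ℂ) - ((j : ℂ) + 1))
      else
        -∑ j ∈ Finset.range (-r).toNat, g.eval (-((j : ℂ) + 1)) * f.eval ((-r : ℂ) - ((j : ℂ) + 1)))
    else 0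

/-- The bracket `[(u,a),(v,b)] = ([u,v]_𝒟, Ψ(u,v))` on `𝒟̂ = 𝒟 ⊕ ℂ·K`. -/
noncomputable def DhatBr (P Q : Dcal × ℂ) : Dcal × ℂ :=
  (Dbr P.1 Q.1, Psi P.1 Q.1)

/-- `φ_s(tᵏ f(D))` is the matrix whose `(j-k, j)` entry is `f(s-j)`, all
other entries `0`. -/
noncomputable def phi (s : ℂ) (u : Dcal) : ℤ → ℤ → ℂ :=
  fun i j => (u (j - i)).eval (s - j)

/-- The linear functional `β_s : ℂ[x] → ℂ` with
`β_s(xˡ) = (B_{l+1}(s) - B_{l+1}(0))/(l+1)`, `B_n` the Bernoulli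
polynomials (`t e^{xt}/(eᵗ - 1) = Σ_n B_n(x) tⁿ/n!`). -/
noncomputable def betaS (s : ℂ) (f : Polynomial ℂ) : ℂ :=
  f.sum fun l c =>
    c * ((((Polynomial.bernoulli (l + 1)).map (algebraMap ℚ ℂ)).eval s
          - ((Polynomial.bernoulli (l + 1)).map (algebraMap ℚ ℂ)).eval 0) / ((l : ℂ) + 1))

/-- The map `φ̂_s : 𝒟̂ → hgl`: `φ̂_s(tᵏ f(D)) = φ_s(tᵏ f(D))` for `k ≠ 0`,
`φ̂_s(t⁰ f(D)) = φ_s(t⁰ f(D)) - β_s(f)·K`, and `φ̂_s(K) = K`. -/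
noncomputable def phihat (s : ℂ) (P : Dcal × ℂ) : (ℤ → ℤ → ℂ) × ℂ :=
  (phi s P.1, P.2 - betaS s (P.1 0))


/-! ### Auxiliary lemmas -/

lemma betaS_def' (s : ℂ) (f : Polynomial ℂ) :
    betaS s f = f.sum fun l c =>
      c * ((((Polynomial.bernoulli (l + 1)).map (algebraMap ℚ ℂ)).eval s
          - ((Polynomial.bernoulli (l + 1)).map (algebraMap ℚ ℂ)).eval 0) / ((l : ℂ) + 1)) := rfl

lemma betaS_zero (s : ℂ) : betaS s 0 = 0 := by
  simp [betaS_def', Polynomial.sum_zero_index]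

lemma betaS_add (s : ℂ) (f g : Polynomial ℂ) : betaS s (f + g) = betaS s f + betaS s g := by
  simp only [betaS_def']
  exact Polynomial.sum_add_index f g _ (fun i => by simp) (fun a b c => by ring)

noncomputable def betaH (s : ℂ) : Polynomial ℂ →+ ℂ := AddMonoidHom.mk' (betaS s) (betaS_add s)

lemma betaS_neg (s : ℂ) (f : Polynomial ℂ) : betaS s (-f) = -betaS s f := (betaH s).map_neg f

lemma betaS_sub (s : ℂ) (f g : Polynomial ℂ) : betaS s (f - g) = betaS s f - betaS s g :=
  (betaH s).map_sub f g

lemma betaS_finset_sum (s : ℂ) {ι : Type*} (T : Finset ι) (p : ι → Polynomial ℂ) :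
    betaS s (∑ i ∈ T, p i) = ∑ i ∈ T, betaS s (p i) := map_sum (betaH s) p T

lemma betaS_smul (s c : ℂ) (f : Polynomial ℂ) : betaS s (c • f) = c * betaS s f := by
  simp only [betaS_def']
  rw [Polynomial.sum_smul_index f c _ (fun i => by simp),
    Polynomial.sum_def, Polynomial.sum_def, Finset.mul_sum]
  exact Finset.sum_congr rfl fun i _ => by ring

lemma betaS_C_mul (s c : ℂ) (f : Polynomial ℂ) : betaS s (C c * f) = c * betaS s f := by
  rw [← smul_eq_C_mul, betaS_smul]

noncomputable def wB (s : ℂ) (l : ℕ) : ℂ :=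
  (((Polynomial.bernoulli (l + 1)).map (algebraMap ℚ ℂ)).eval s
          - ((Polynomial.bernoulli (l + 1)).map (algebraMap ℚ ℂ)).eval 0) / ((l : ℂ) + 1)

lemma betaS_monomial (s c : ℂ) (l : ℕ) : betaS s (monomial l c) = c * wB s l := by
  simp only [betaS_def']
  exact Polynomial.sum_monomial_index c _ (by simp)

lemma betaS_X_pow (s : ℂ) (l : ℕ) : betaS s (X ^ l) = wB s l := by
  rw [X_pow_eq_monomial, betaS_monomial, one_mul]

lemma bern_eval_sum (n : ℕ) (x : ℂ) :
    ∑ k ∈ Finset.range (n+1),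
      ((n+1).choose k : ℂ) * ((Polynomial.bernoulli k).map (algebraMap ℚ ℂ)).eval x
      = ((n:ℂ)+1) * x^n := by
  have h := congrArg (fun p : Polynomial ℚ => (p.map (algebraMap ℚ ℂ)).eval x)
    (Polynomial.sum_bernoulli n)
  simp only [Polynomial.map_sum, Polynomial.eval_finset_sum, Polynomial.map_monomial,
    Polynomial.eval_monomial, smul_eq_C_mul, Polynomial.map_mul, Polynomial.map_C,
    Polynomial.eval_mul, Polynomial.eval_C] at h
  rw [show ((algebraMap ℚ ℂ) ((n:ℚ)+1)) = ((n:ℂ)+1) by push_cast [map_natCast]; simp] at h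
  rw [← h]
  exact Finset.sum_congr rfl fun k hk => by rw [map_natCast]

noncomputable def Bc (k : ℕ) : Polynomial ℂ := (Polynomial.bernoulli k).map (algebraMap ℚ ℂ)

lemma wB_eq (s : ℂ) (l : ℕ) : wB s l = ((Bc (l+1)).eval s - (Bc (l+1)).eval 0) / ((l:ℂ)+1) := rfl

lemma wB_sum (s : ℂ) (n : ℕ) :
    ∑ m ∈ Finset.range n, (n.choose m : ℂ) * wB s m = s^n - 0^n := by
  have hne : ∀ k : ℕ, ((k:ℂ)+1) ≠ 0 := fun k => Nat.cast_add_one_ne_zero k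
  have step1 : ∀ m, (n.choose m : ℂ) * wB s m
      = ((n+1).choose (m+1) : ℂ) * ((Bc (m+1)).eval s - (Bc (m+1)).eval 0) / ((n:ℂ)+1) := by
    intro m
    have hnat := Nat.add_one_mul_choose_eq n m
    have hc : ((n:ℂ)+1) * (n.choose m : ℂ) = ((n+1).choose (m+1) : ℂ) * ((m:ℂ)+1) := by
      exact_mod_cast congrArg (Nat.cast : ℕ → ℂ) hnat
    rw [wB_eq, ← mul_div_assoc, div_eq_div_iff (hne m) (hne n)]
    linear_combination ((Bc (m+1)).eval s - (Bc (m+1)).eval 0) * hc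
  have hb : ∀ x : ℂ, ∑ k ∈ Finset.range (n+1), ((n+1).choose k : ℂ) * (Bc k).eval x
      = ((n:ℂ)+1) * x^n := fun x => bern_eval_sum n x
  have hΔ0 : (Bc 0).eval s - (Bc 0).eval 0 = 0 := by
    have h1 : Bc 0 = 1 := by unfold Bc; rw [Polynomial.bernoulli_zero, Polynomial.map_one]
    rw [h1]; simp
  calc ∑ m ∈ Finset.range n, (n.choose m : ℂ) * wB s m
      = (∑ m ∈ Finset.range n,
          ((n+1).choose (m+1) : ℂ) * ((Bc (m+1)).eval s - (Bc (m+1)).eval 0)) / ((n:ℂ)+1) := by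
        rw [Finset.sum_div]; exact Finset.sum_congr rfl fun m _ => step1 m
    _ = (∑ k ∈ Finset.range (n+1),
          ((n+1).choose k : ℂ) * ((Bc k).eval s - (Bc k).eval 0)) / ((n:ℂ)+1) := by
        rw [Finset.sum_range_succ' (fun k => ((n+1).choose k : ℂ) * ((Bc k).eval s - (Bc k).eval 0)) n]
        rw [hΔ0]; ring
    _ = (((n:ℂ)+1) * s^n - ((n:ℂ)+1) * 0^n) / ((n:ℂ)+1) := by
        congr 1
        simp_rw [mul_sub, Finset.sum_sub_distrib]
        rw [hb s, hb 0]
    _ = s^n - 0^n := by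
        rw [← mul_sub, mul_comm, mul_div_assoc, div_self (hne n), mul_one]

lemma betaS_shift (s : ℂ) (p : Polynomial ℂ) :
    betaS s (p.comp (X + C 1)) - betaS s p = p.eval s - p.eval 0 := by
  induction p using Polynomial.induction_on' with
  | add f g hf hg =>
    rw [add_comp, betaS_add, betaS_add, eval_add, eval_add]
    linear_combination hf + hg
  | monomial n c =>
    rw [← C_mul_X_pow_eq_monomial, mul_comp, C_comp, pow_comp, X_comp,
      betaS_C_mul, betaS_C_mul, eval_mul, eval_C, eval_mul, eval_C, eval_pow, eval_X,
      eval_pow, eval_X]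
    have core : betaS s ((X + C 1)^n) - betaS s (X^n) = s^n - 0^n := by
      rw [add_pow]
      simp only [map_one, one_pow, mul_one]
      rw [betaS_finset_sum]
      have hterm : ∀ m, betaS s ((X:Polynomial ℂ)^m * (n.choose m : Polynomial ℂ))
          = (n.choose m:ℂ) * wB s m := fun m => by
        rw [← C_eq_natCast, mul_comm, betaS_C_mul, betaS_X_pow]
      rw [Finset.sum_congr rfl fun m _ => hterm m, Finset.sum_range_succ, wB_sum,
        Nat.choose_self, betaS_X_pow]
      push_cast
      ring
    linear_combination c * core

lemma betaS_shift' (s : ℂ) (p : Polynomial ℂ) :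
    betaS s (p.comp (X + C 1) - p) = p.eval s - p.eval 0 := by
  rw [betaS_sub, betaS_shift]

lemma hXsubC (a : ℂ) : ((X : Polynomial ℂ) - C a).comp (X + C 1) = X - C (a - 1) := by
  rw [sub_comp, X_comp, C_comp, map_sub, map_one]; ring

lemma hXaddC (a : ℂ) : ((X : Polynomial ℂ) + C a).comp (X + C 1) = X + C (a + 1) := by
  rw [add_comp, X_comp, C_comp, map_add, map_one]; ring

lemma key (s : ℂ) (r : ℤ) (f g : Polynomial ℂ) :
    (if 0 ≤ r then
        ∑ j ∈ Finset.range r.toNat, f.eval (-((j : ℂ) + 1)) * g.eval ((r : ℂ) - ((j : ℂ) + 1))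
      else
        -∑ j ∈ Finset.range (-r).toNat, g.eval (-((j : ℂ) + 1)) * f.eval (-(r : ℂ) - ((j : ℂ) + 1)))
      - betaS s (f.comp (X + C (-(r:ℂ))) * g - f * g.comp (X + C (r:ℂ)))
    = ∑ᶠ i : ℤ, f.eval (s - (i:ℂ) - (r:ℂ)) *
        ((if i ≤ 0 then (1:ℂ) else 0) - (if i + r ≤ 0 then (1:ℂ) else 0)) * g.eval (s - (i:ℂ)) := by
  rcases lt_trichotomy r 0 with hr | hr | hr
  · -- r < 0
    have hm : ((-r).toNat : ℤ) = -r := Int.toNat_of_nonneg (by omega)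
    set m := (-r).toNat with hmdef
    have hmC : ((m:ℕ) : ℂ) = -(r:ℂ) := by exact_mod_cast congrArg (Int.cast : ℤ → ℂ) hm
    set A : ℕ → Polynomial ℂ :=
      fun j => g.comp (X - C (j:ℂ)) * f.comp (X + C (-(r:ℂ) - (j:ℂ))) with hA
    set h := ∑ j ∈ Finset.range m, A (j+1) with hh
    have hcomp : h.comp (X + C 1) = ∑ j ∈ Finset.range m, A j := by
      rw [hh, Polynomial.sum_comp]
      refine Finset.sum_congr rfl fun j _ => ?_
      rw [hA]; simp only
      rw [mul_comp, Polynomial.comp_assoc, Polynomial.comp_assoc, hXsubC, hXaddC]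
      push_cast
      ring_nf
    have htel : h.comp (X + C 1) - h = A 0 - A m := by
      rw [hcomp, hh, ← Finset.sum_sub_distrib, Finset.sum_range_sub' A m]
    have h0 : A 0 = g * f.comp (X + C (-(r:ℂ))) := by
      rw [hA]; simp only [Nat.cast_zero, map_zero, sub_zero, comp_X]
    have hAm : A m = g.comp (X + C (r:ℂ)) * f := by
      rw [hA]; simp only [hmC]
      rw [show (X - C (-(r:ℂ))) = X + C (r:ℂ) by rw [map_neg]; ring,
        show (-(r:ℂ) - -(r:ℂ)) = 0 by ring]
      simp
    have harg : f.comp (X + C (-(r:ℂ))) * g - f * g.comp (X + C (r:ℂ))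
        = h.comp (X + C 1) - h := by rw [htel, h0, hAm]; ring
    have hbeta : betaS s (f.comp (X + C (-(r:ℂ))) * g - f * g.comp (X + C (r:ℂ)))
        = h.eval s - h.eval 0 := by rw [harg, betaS_shift']
    rw [if_neg (by omega), hbeta]
    have hev0 : h.eval 0 = ∑ j ∈ Finset.range m,
        g.eval (-((j:ℂ)+1)) * f.eval (-(r:ℂ) - ((j:ℂ)+1)) := by
      rw [hh, eval_finset_sum]
      refine Finset.sum_congr rfl fun j _ => ?_
      rw [hA]; simp only [eval_mul, eval_comp, eval_sub, eval_add, eval_X, eval_C]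
      push_cast; ring_nf
    have hevs : h.eval s = ∑ j ∈ Finset.range m,
        g.eval (s - ((j:ℂ)+1)) * f.eval (s - (r:ℂ) - ((j:ℂ)+1)) := by
      rw [hh, eval_finset_sum]
      refine Finset.sum_congr rfl fun j _ => ?_
      rw [hA]; simp only [eval_mul, eval_comp, eval_sub, eval_add, eval_X, eval_C]
      push_cast; ring_nf
    rw [← hev0]
    have hL : -h.eval 0 - (h.eval s - h.eval 0) = -h.eval s := by ring
    rw [hL]
    have hsupp : (Function.support fun i : ℤ => f.eval (s - (i:ℂ) - (r:ℂ)) *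
        ((if i ≤ 0 then (1:ℂ) else 0) - (if i + r ≤ 0 then (1:ℂ) else 0)) * g.eval (s - (i:ℂ)))
        ⊆ ↑((Finset.range m).image fun j : ℕ => (j:ℤ) + 1) := by
      intro i hi
      simp only [Function.mem_support, ne_eq] at hi
      simp only [Finset.coe_image, Set.mem_image, Finset.mem_coe, Finset.mem_range]
      by_contra hmem
      push_neg at hmem
      apply hi
      have hiff : (i ≤ 0) ↔ (i + r ≤ 0) := by
        constructor <;> intro h'
        · omega
        · by_contra h''
          have hj := hmem (i - 1).toNat (by omega)
          omega
      rw [if_congr hiff rfl rfl, sub_self, mul_zero, zero_mul]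
    rw [finsum_eq_sum_of_support_subset _ hsupp,
      Finset.sum_image (by intro a _ b _ hab; have hab' : (a:ℤ) + 1 = (b:ℤ) + 1 := hab; omega), hevs, ← Finset.sum_neg_distrib]
    refine Finset.sum_congr rfl fun j hj => ?_
    simp only [Finset.mem_range] at hj
    rw [if_neg (by omega), if_pos (by omega)]
    push_cast
    ring_nf
  · subst hr
    rw [if_pos le_rfl]
    simp only [Int.toNat_zero, Finset.range_zero, Finset.sum_empty, Int.cast_zero, neg_zero,
      map_zero, add_zero, comp_X, add_zero]
    rw [sub_self, betaS_zero]
    rw [finsum_eq_zero_of_forall_eq_zero (fun i => by rw [sub_self, mul_zero, zero_mul])]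
    ring
  · -- 0 < r
    have hm : (r.toNat : ℤ) = r := Int.toNat_of_nonneg hr.le
    set n := r.toNat with hndef
    have hnC : ((n:ℕ) : ℂ) = (r:ℂ) := by exact_mod_cast congrArg (Int.cast : ℤ → ℂ) hm
    set A : ℕ → Polynomial ℂ :=
      fun j => f.comp (X - C (j:ℂ)) * g.comp (X + C ((r:ℂ) - (j:ℂ))) with hA
    set h := ∑ j ∈ Finset.range n, A (j+1) with hh
    have hcomp : h.comp (X + C 1) = ∑ j ∈ Finset.range n, A j := by
      rw [hh, Polynomial.sum_comp]
      refine Finset.sum_congr rfl fun j _ => ?_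
      rw [hA]; simp only
      rw [mul_comp, Polynomial.comp_assoc, Polynomial.comp_assoc, hXsubC, hXaddC]
      push_cast
      ring_nf
    have htel : h.comp (X + C 1) - h = A 0 - A n := by
      rw [hcomp, hh, ← Finset.sum_sub_distrib, Finset.sum_range_sub' A n]
    have h0 : A 0 = f * g.comp (X + C (r:ℂ)) := by
      rw [hA]; simp only [Nat.cast_zero, map_zero, sub_zero, comp_X]
    have hAn : A n = f.comp (X + C (-(r:ℂ))) * g := by
      rw [hA]; simp only [hnC]
      rw [show (X - C ((r:ℂ))) = X + C (-(r:ℂ)) by rw [map_neg]; ring,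
        show ((r:ℂ) - (r:ℂ)) = 0 by ring]
      simp
    have harg : f.comp (X + C (-(r:ℂ))) * g - f * g.comp (X + C (r:ℂ))
        = -(h.comp (X + C 1) - h) := by rw [htel, h0, hAn]; ring
    have hbeta : betaS s (f.comp (X + C (-(r:ℂ))) * g - f * g.comp (X + C (r:ℂ)))
        = -(h.eval s - h.eval 0) := by rw [harg, betaS_neg, betaS_shift']
    rw [if_pos hr.le, hbeta]
    have hev0 : h.eval 0 = ∑ j ∈ Finset.range n,
        f.eval (-((j:ℂ)+1)) * g.eval ((r:ℂ) - ((j:ℂ)+1)) := by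
      rw [hh, eval_finset_sum]
      refine Finset.sum_congr rfl fun j _ => ?_
      rw [hA]; simp only [eval_mul, eval_comp, eval_sub, eval_add, eval_X, eval_C]
      push_cast; ring_nf
    have hevs : h.eval s = ∑ j ∈ Finset.range n,
        f.eval (s - ((j:ℂ)+1)) * g.eval (s + (r:ℂ) - ((j:ℂ)+1)) := by
      rw [hh, eval_finset_sum]
      refine Finset.sum_congr rfl fun j _ => ?_
      rw [hA]; simp only [eval_mul, eval_comp, eval_sub, eval_add, eval_X, eval_C]
      push_cast; ring_nf
    rw [← hev0]
    have hL : h.eval 0 - -(h.eval s - h.eval 0) = h.eval s := by ring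
    rw [hL]
    have hsupp : (Function.support fun i : ℤ => f.eval (s - (i:ℂ) - (r:ℂ)) *
        ((if i ≤ 0 then (1:ℂ) else 0) - (if i + r ≤ 0 then (1:ℂ) else 0)) * g.eval (s - (i:ℂ)))
        ⊆ ↑((Finset.range n).image fun j : ℕ => (j:ℤ) + 1 - n) := by
      intro i hi
      simp only [Function.mem_support, ne_eq] at hi
      simp only [Finset.coe_image, Set.mem_image, Finset.mem_coe, Finset.mem_range]
      by_contra hmem
      push_neg at hmem
      apply hi
      have hiff : (i ≤ 0) ↔ (i + r ≤ 0) := by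
        constructor <;> intro h'
        · by_contra h''
          have hj := hmem (i + n - 1).toNat (by omega)
          omega
        · omega
      rw [if_congr hiff rfl rfl, sub_self, mul_zero, zero_mul]
    rw [finsum_eq_sum_of_support_subset _ hsupp,
      Finset.sum_image (by intro a _ b _ hab; have hab' : (a:ℤ) + 1 - n = (b:ℤ) + 1 - n := hab; omega), hevs]
    refine Finset.sum_congr rfl fun j hj => ?_
    simp only [Finset.mem_range] at hj
    rw [if_pos (by omega), if_neg (by omega)]
    push_cast [hm]
    ring_nf

lemma matpart (s : ℂ) (u v : Dcal) : phi s (Dbr u v) = matBr (phi s u) (phi s v) := by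
  funext i j
  have hL : phi s (Dbr u v) i j = ∑ r ∈ u.support,
      ((u r).eval (s - (i:ℂ) - (r:ℂ)) * (v (j - i - r)).eval (s - (j:ℂ))
        - (u r).eval (s - (j:ℂ)) * (v (j - i - r)).eval (s - (j:ℂ) + (r:ℂ))) := by
    show ((Dbr u v) (j - i)).eval (s - (j:ℂ)) = _
    rw [Dbr, Finsupp.sum, Finsupp.finset_sum_apply, eval_finset_sum]
    refine Finset.sum_congr rfl fun r hr => ?_
    rw [Finsupp.sum, Finsupp.finset_sum_apply, eval_finset_sum]
    have hstep : ∀ s' ∈ v.support,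
        (Finsupp.single (r + s') ((u r).comp (X + C ((s':ℤ):ℂ)) * v s'
            - u r * (v s').comp (X + C ((r:ℤ):ℂ))) (j - i)).eval (s - (j:ℂ))
        = if s' = j - i - r then ((u r).comp (X + C ((s':ℤ):ℂ)) * v s'
            - u r * (v s').comp (X + C ((r:ℤ):ℂ))).eval (s - (j:ℂ)) else 0 := by
      intro s' _
      rw [Finsupp.single_apply, apply_ite (Polynomial.eval (s - (j:ℂ)))]
      exact if_congr (by omega) rfl eval_zero
    rw [Finset.sum_congr rfl hstep, Finset.sum_ite_eq' v.support (j - i - r)]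
    split_ifs with hmem
    · simp only [eval_sub, eval_mul, eval_comp, eval_add, eval_X, eval_C]
      push_cast
      ring_nf
    · have hv : v (j - i - r) = 0 := Finsupp.notMem_support_iff.mp hmem
      rw [hv]
      simp
  have hR1 : matMul (phi s u) (phi s v) i j = ∑ r ∈ u.support,
      (u r).eval (s - (i:ℂ) - (r:ℂ)) * (v (j - i - r)).eval (s - (j:ℂ)) := by
    rw [matMul]
    have hs1 : (Function.support fun k : ℤ => phi s u i k * phi s v k j)
        ⊆ ↑(u.support.image (fun r => r + i)) := by
      intro k hk
      simp only [Function.mem_support] at hk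
      simp only [Finset.coe_image, Set.mem_image, Finset.mem_coe]
      refine ⟨k - i, Finsupp.mem_support_iff.mpr fun h0 => hk ?_, by ring⟩
      simp [phi, h0]
    rw [finsum_eq_sum_of_support_subset _ hs1, Finset.sum_image (fun a _ b _ h => by omega)]
    refine Finset.sum_congr rfl fun r hr => ?_
    show (u (r + i - i)).eval (s - ((r + i : ℤ):ℂ)) * (v (j - (r + i))).eval (s - (j:ℂ)) = _
    rw [show r + i - i = r by ring, show j - (r + i) = j - i - r by ring]
    push_cast
    ring_nf
  have hR2 : matMul (phi s v) (phi s u) i j = ∑ r ∈ u.support,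
      (v (j - i - r)).eval (s - (j:ℂ) + (r:ℂ)) * (u r).eval (s - (j:ℂ)) := by
    rw [matMul]
    have hs2 : (Function.support fun k : ℤ => phi s v i k * phi s u k j)
        ⊆ ↑(u.support.image (fun r => j - r)) := by
      intro k hk
      simp only [Function.mem_support] at hk
      simp only [Finset.coe_image, Set.mem_image, Finset.mem_coe]
      refine ⟨j - k, Finsupp.mem_support_iff.mpr fun h0 => hk ?_, by ring⟩
      simp [phi, h0]
    rw [finsum_eq_sum_of_support_subset _ hs2, Finset.sum_image (fun a _ b _ h => by omega)]
    refine Finset.sum_congr rfl fun r hr => ?_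
    show (v (j - r - i)).eval (s - ((j - r : ℤ):ℂ)) * (u (j - (j - r))).eval (s - (j:ℂ)) = _
    rw [show j - (j - r) = r by ring, show j - r - i = j - i - r by ring]
    push_cast
    ring_nf
  show phi s (Dbr u v) i j = matMul (phi s u) (phi s v) i j - matMul (phi s v) (phi s u) i j
  rw [hL, hR1, hR2, ← Finset.sum_sub_distrib]
  exact Finset.sum_congr rfl fun r _ => by ring

lemma scalarpart (s : ℂ) (u v : Dcal) :
    Psi u v - betaS s ((Dbr u v) 0) = Ccoc (phi s u) (phi s v) := by
  -- Left-hand side as a single sum over the support of `u`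
  have hPsi : Psi u v = ∑ r ∈ u.support,
      (if 0 ≤ r then
        ∑ j ∈ Finset.range r.toNat,
          (u r).eval (-((j : ℂ) + 1)) * (v (-r)).eval ((r : ℂ) - ((j : ℂ) + 1))
      else
        -∑ j ∈ Finset.range (-r).toNat,
          (v (-r)).eval (-((j : ℂ) + 1)) * (u r).eval (-(r : ℂ) - ((j : ℂ) + 1))) := by
    rw [Psi]
    rw [Finsupp.sum]
    refine Finset.sum_congr rfl fun r _ => ?_
    rw [Finsupp.sum]
    have hstep : ∀ s' ∈ v.support,
        (if r + s' = 0 then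
          (if 0 ≤ r then
            ∑ j ∈ Finset.range r.toNat,
              (u r).eval (-((j : ℂ) + 1)) * (v s').eval ((r : ℂ) - ((j : ℂ) + 1))
          else
            -∑ j ∈ Finset.range (-r).toNat,
              (v s').eval (-((j : ℂ) + 1)) * (u r).eval (-(r : ℂ) - ((j : ℂ) + 1)))
        else 0)
        = if s' = -r then
          (if 0 ≤ r then
            ∑ j ∈ Finset.range r.toNat,
              (u r).eval (-((j : ℂ) + 1)) * (v s').eval ((r : ℂ) - ((j : ℂ) + 1))
          else
            -∑ j ∈ Finset.range (-r).toNat,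
              (v s').eval (-((j : ℂ) + 1)) * (u r).eval (-(r : ℂ) - ((j : ℂ) + 1)))
        else 0 := fun s' _ => if_congr (by omega) rfl rfl
    rw [Finset.sum_congr rfl hstep, Finset.sum_ite_eq' v.support (-r)]
    split_ifs with hmem h0r h0r
    · rfl
    · rfl
    · have hv : v (-r) = 0 := Finsupp.notMem_support_iff.mp hmem
      rw [hv]
      simp
    · have hv : v (-r) = 0 := Finsupp.notMem_support_iff.mp hmem
      rw [hv]
      simp
  have hDbr0 : (Dbr u v) 0 = ∑ r ∈ u.support,
      (if (-r) ∈ v.support then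
        ((u r).comp (X + C ((-r : ℤ):ℂ)) * v (-r) - u r * (v (-r)).comp (X + C ((r:ℤ):ℂ)))
      else 0) := by
    rw [Dbr, Finsupp.sum, Finsupp.finset_sum_apply]
    refine Finset.sum_congr rfl fun r _ => ?_
    rw [Finsupp.sum, Finsupp.finset_sum_apply]
    have hstep : ∀ s' ∈ v.support,
        (Finsupp.single (r + s') ((u r).comp (X + C ((s':ℤ):ℂ)) * v s'
          - u r * (v s').comp (X + C ((r:ℤ):ℂ)))) 0
        = if s' = -r then ((u r).comp (X + C ((s':ℤ):ℂ)) * v s'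
          - u r * (v s').comp (X + C ((r:ℤ):ℂ))) else 0 := fun s' _ => by
      rw [Finsupp.single_apply]
      exact if_congr (by omega) rfl rfl
    rw [Finset.sum_congr rfl hstep, Finset.sum_ite_eq' v.support (-r)]
  have hbeta : betaS s ((Dbr u v) 0) = ∑ r ∈ u.support,
      betaS s ((u r).comp (X + C (-(r:ℂ))) * v (-r)
        - u r * (v (-r)).comp (X + C (r:ℂ))) := by
    rw [hDbr0, betaS_finset_sum]
    refine Finset.sum_congr rfl fun r _ => ?_
    push_cast
    split_ifs with hmem
    · rfl
    · have hv : v (-r) = 0 := Finsupp.notMem_support_iff.mp hmem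
      rw [hv]
      simp [betaS_zero]
  -- Right-hand side
  have hbr : ∀ i k : ℤ, matBr Jmat (phi s u) i k
      = (u (k - i)).eval (s - (k:ℂ)) *
        ((if i ≤ 0 then (1:ℂ) else 0) - (if k ≤ 0 then (1:ℂ) else 0)) := by
    intro i k
    show matMul Jmat (phi s u) i k - matMul (phi s u) Jmat i k = _
    rw [matMul, matMul]
    rw [finsum_eq_single _ i (fun m hm => by simp [Jmat, Ne.symm hm]),
      finsum_eq_single _ k (fun m hm => by simp [Jmat, hm])]
    simp only [Jmat, phi, eq_self_iff_true, true_and]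
    ring
  have hinner : ∀ i : ℤ, matMul (matBr Jmat (phi s u)) (phi s v) i i
      = ∑ r ∈ u.support, (u r).eval (s - (i:ℂ) - (r:ℂ)) *
          ((if i ≤ 0 then (1:ℂ) else 0) - (if i + r ≤ 0 then (1:ℂ) else 0)) *
          (v (-r)).eval (s - (i:ℂ)) := by
    intro i
    rw [matMul]
    have hsupp : (Function.support fun k : ℤ => matBr Jmat (phi s u) i k * phi s v k i)
        ⊆ ↑(u.support.image (fun r => i + r)) := by
      intro k hk
      simp only [Function.mem_support] at hk
      simp only [Finset.coe_image, Set.mem_image, Finset.mem_coe]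
      refine ⟨k - i, Finsupp.mem_support_iff.mpr fun h0 => hk ?_, by ring⟩
      rw [hbr, h0]
      simp
    rw [finsum_eq_sum_of_support_subset _ hsupp, Finset.sum_image (fun a _ b _ h => by omega)]
    refine Finset.sum_congr rfl fun r hr => ?_
    rw [hbr]
    show (u (i + r - i)).eval (s - ((i + r : ℤ):ℂ)) * _ * phi s v (i + r) i = _
    rw [show i + r - i = r by ring]
    simp only [phi]
    rw [show i - (i + r) = -r by ring]
    push_cast
    ring_nf
  have hC : Ccoc (phi s u) (phi s v) = ∑ r ∈ u.support,
      ∑ᶠ i : ℤ, (u r).eval (s - (i:ℂ) - (r:ℂ)) *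
        ((if i ≤ 0 then (1:ℂ) else 0) - (if i + r ≤ 0 then (1:ℂ) else 0)) *
        (v (-r)).eval (s - (i:ℂ)) := by
    rw [Ccoc, matTr, finsum_congr hinner]
    refine finsum_sum_comm u.support _ fun r _ => ?_
    apply Set.Finite.subset (Finset.finite_toSet ((Finset.Icc (1-r) 0) ∪ (Finset.Icc 1 (-r))))
    intro i hi
    simp only [Function.mem_support, ne_eq] at hi
    simp only [Finset.coe_union, Set.mem_union, Finset.coe_Icc, Set.mem_Icc]
    by_contra hmem
    push_neg at hmem
    apply hi
    have hiff : (i ≤ 0) ↔ (i + r ≤ 0) := by omega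
    rw [if_congr hiff rfl rfl, sub_self, mul_zero, zero_mul]
  rw [hPsi, hbeta, hC, ← Finset.sum_sub_distrib]
  exact Finset.sum_congr rfl fun r _ => key s r (u r) (v (-r))

/-- For every `s ∈ ℂ`, `φ̂_s` is an injective homomorphism of Lie algebras
from  `𝒟̂ = 𝒟 ⊕ ℂ·K` to `hgl = glbar ⊕ ℂ·K`. -/
theorem phihat_is_injective_hom (s : ℂ) :
    (∀ (k : ℤ), k ≠ 0 → ∀ f : Polynomial ℂ,
      phihat s (Finsupp.single k f, 0) = (phi s (Finsupp.single k f), 0)) ∧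
    (∀ f : Polynomial ℂ,
      phihat s (Finsupp.single 0 f, 0) = (phi s (Finsupp.single 0 f), -betaS s f)) ∧
    phihat s (0, 1) = (0, 1) ∧
    (∀ P Q : Dcal × ℂ, phihat s (P + Q) = phihat s P + phihat s Q) ∧
    (∀ (c : ℂ) (P : Dcal × ℂ), phihat s (c • P) = c • phihat s P) ∧
    (∀ P Q : Dcal × ℂ, phihat s (DhatBr P Q) = hglBr (phihat s P) (phihat s Q)) ∧
    Function.Injective (phihat s) := by
  refine ⟨?_, ?_, ?_, ?_, ?_, ?_, ?_⟩
  · intro k hk f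
    simp only [phihat, Prod.mk.injEq, true_and]
    rw [Finsupp.single_eq_of_ne' hk, betaS_zero, sub_zero]
  · intro f
    simp only [phihat, Prod.mk.injEq, true_and]
    rw [Finsupp.single_eq_same, zero_sub]
  · simp only [phihat, Prod.mk.injEq]
    constructor
    · funext i j
      simp [phi]
    · simp [betaS_zero]
  · intro P Q
    simp only [phihat, Prod.fst_add, Prod.snd_add, Prod.mk_add_mk, Prod.mk.injEq]
    constructor
    · funext i j
      simp [phi, Finsupp.add_apply]
    · rw [Finsupp.add_apply, betaS_add]
      ring
  · intro c P
    simp only [phihat, Prod.smul_fst, Prod.smul_snd, Prod.smul_mk, Prod.mk.injEq, smul_eq_mul]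
    constructor
    · funext i j
      simp [phi, Finsupp.smul_apply, Polynomial.eval_smul, smul_eq_mul]
    · rw [Finsupp.smul_apply, betaS_smul]
      ring
  · intro P Q
    show (phi s (Dbr P.1 Q.1), Psi P.1 Q.1 - betaS s ((Dbr P.1 Q.1) 0))
        = (matBr (phi s P.1) (phi s Q.1), Ccoc (phi s P.1) (phi s Q.1))
    exact Prod.ext (matpart s P.1 Q.1) (scalarpart s P.1 Q.1)
  · intro P Q h
    have h1 : phi s P.1 = phi s Q.1 := congrArg Prod.fst h
    have hu : P.1 = Q.1 := by
      ext k m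
      have hroots : ∀ j : ℤ, (P.1 k).eval (s - (j:ℂ)) = (Q.1 k).eval (s - (j:ℂ)) := by
        intro j
        have h2 := congrFun (congrFun h1 (j - k)) j
        simpa [phi, show j - (j - k) = k by ring] using h2
      have hzero : P.1 k - Q.1 k = 0 := by
        apply Polynomial.eq_zero_of_infinite_isRoot
        apply Set.infinite_of_injective_forall_mem (f := fun j : ℤ => s - (j:ℂ))
        · intro a b hab
          simp only at hab
          exact_mod_cast sub_right_inj.mp hab
        · intro j
          simp [Polynomial.IsRoot, hroots j]
      have := sub_eq_zero.mp hzero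
      rw [this]
    have h2 : P.2 - betaS s (P.1 0) = Q.2 - betaS s (Q.1 0) := congrArg Prod.snd h
    rw [hu] at h2
    have h3 : P.2 = Q.2 := by
      have := sub_left_inj.mp h2
      exact this
    exact Prod.ext hu h3
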